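/- arXiv:1406.6740 — 5 statements merged into one kernel-verified Lean document; each statement's English description precedes it below -/
import Mathlib

section
/- Let N ≥ 8 be an integer with N mod 3 ≠ 1, and let g_0, …, g_N be arbitrary positive real numbers. Then there exist unique positive real numbers λ_0, …, λ_N such that: (i) λ_i·λ_{i+1}·λ_{i+2} = g_i for every 0 ≤ i ≤ N−2; (ii) λ_{N−1}·λ_N·P = g_{N−1}; and (iii) λ_N·P·Q = g_N, where P := λ_0·λ_1·λ_2²·λ_3·λ_4·λ_5·λ_{N−2}·λ_{N−1}·λ_N and Q := λ_0·λ_1·λ_2·λ_3. -/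
/-!
Taking logarithms turns the system into a square linear system in `log λ_0, …, log λ_N`, so
existence follows from uniqueness, and it suffices that the homogeneous system has only the
trivial solution. A homogeneous solution `x` has vanishing sums of three consecutive terms, so it
is `3`-periodic with `x 0 + x 1 + x 2 = 0`; then `log P = x 2` and `log Q = x 0`, and the two
boundary equations, read modulo `3`, force `x 0 = x 1 = x 2 = 0` unless `N ≡ 1 (mod 3)`.
-/

/-- The factor `P := λ₀·λ₁·λ₂²·λ₃·λ₄·λ₅·λ_{N−2}·λ_{N−1}·λ_N`. -/
def Pfac (N : ℕ) (l : ℕ → ℝ) : ℝ :=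
  l 0 * l 1 * (l 2) ^ 2 * l 3 * l 4 * l 5 * l (N - 2) * l (N - 1) * l N

/-- The factor `Q := λ₀·λ₁·λ₂·λ₃`. -/
def Qfac (l : ℕ → ℝ) : ℝ := l 0 * l 1 * l 2 * l 3

/-- The multiplicative system determining the normalized lift of a twisted
pentagram spiral of type `(N,1)`:
(i) `λ_i·λ_{i+1}·λ_{i+2} = g_i` for `0 ≤ i ≤ N−2`;
(ii) `λ_{N−1}·λ_N·P = g_{N−1}`; (iii) `λ_N·P·Q = g_N`;
with all `λ_0, …, λ_N` positive. -/
def SysHolds (N : ℕ) (g l : ℕ → ℝ) : Prop :=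
  (∀ i, i ≤ N → 0 < l i) ∧
  (∀ i, i ≤ N - 2 → l i * l (i + 1) * l (i + 2) = g i) ∧
  l (N - 1) * l N * Pfac N l = g (N - 1) ∧
  l N * Pfac N l * Qfac l = g N

open Real

theorem apply_eq_apply_mod_three_of_add_add_eq {M : Type*} [AddCancelCommMonoid M]
    {x : ℕ → M} {n : ℕ} {c : M} (h : ∀ i ≤ n, x i + x (i + 1) + x (i + 2) = c) :
    ∀ i ≤ n + 2, x i = x (i % 3) := by
  intro i
  induction i using Nat.strong_induction_on with
  | _ i ih =>
    intro hi
    rcases lt_or_ge i 3 with hi3 | hi3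
    · rw [Nat.mod_eq_of_lt hi3]
    · obtain ⟨j, rfl⟩ : ∃ j, i = j + 3 := ⟨i - 3, by omega⟩
      have hshift : x (j + 1) + x (j + 2) + x (j + 3) = x (j + 1) + x (j + 2) + x j :=
        calc _ = c := h (j + 1) (by omega)
          _ = x j + x (j + 1) + x (j + 2) := (h j (by omega)).symm
          _ = _ := add_rotate _ _ _
      rw [add_left_cancel hshift, ih j (by omega) (by omega), Nat.add_mod_right]

def logP (N : ℕ) (x : ℕ → ℝ) : ℝ :=
  x 0 + x 1 + 2 * x 2 + x 3 + x 4 + x 5 + x (N - 2) + x (N - 1) + x N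

def logQ (x : ℕ → ℝ) : ℝ := x 0 + x 1 + x 2 + x 3

/-- Row `i ≤ N` is the logarithm of the `i`-th equation of `SysHolds N`; rows `i > N` repeat
row `N` and are never used. -/
def logSys (N : ℕ) : (ℕ → ℝ) →ₗ[ℝ] ℕ → ℝ where
  toFun x i :=
    if i ≤ N - 2 then x i + x (i + 1) + x (i + 2)
    else if i = N - 1 then x (N - 1) + x N + logP N x
    else x N + logP N x + logQ x
  map_add' x y := by
    ext i
    simp only [logP, logQ, Pi.add_apply]
    split_ifs <;> ring
  map_smul' c x := by
    ext i
    simp only [logP, logQ, Pi.smul_apply, smul_eq_mul, RingHom.id_apply]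
    split_ifs <;> ring

theorem logSys_eqOn_iff {N : ℕ} (hN : 2 ≤ N) {x h : ℕ → ℝ} :
    (∀ i ≤ N, logSys N x i = h i) ↔
      (∀ i ≤ N - 2, x i + x (i + 1) + x (i + 2) = h i) ∧
      x (N - 1) + x N + logP N x = h (N - 1) ∧ x N + logP N x + logQ x = h N := by
  simp only [logSys, LinearMap.coe_mk, AddHom.coe_mk]
  constructor
  · intro hx
    refine ⟨fun i hi => ?_, ?_, ?_⟩
    · simpa [hi] using hx i (by omega)
    · simpa [show ¬N - 1 ≤ N - 2 by omega] using hx (N - 1) (by omega)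
    · simpa [show ¬N ≤ N - 2 by omega, show N ≠ N - 1 by omega] using hx N le_rfl
  · rintro ⟨htri, hlast₁, hlast₂⟩ i hi
    split_ifs with h₁ h₂
    · exact htri i h₁
    · exact h₂ ▸ hlast₁
    · obtain rfl : i = N := by omega
      exact hlast₂

theorem eq_zero_of_logSys_eq_zero {N : ℕ} (hN : 8 ≤ N) (h3 : N % 3 ≠ 1) {x : ℕ → ℝ}
    (hx : ∀ i ≤ N, logSys N x i = 0) : ∀ i ≤ N, x i = 0 := by
  obtain ⟨htri, hlast₁, hlast₂⟩ := (logSys_eqOn_iff (by omega)).1 hx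
  have hper : ∀ i ≤ N, x i = x (i % 3) := fun i hi =>
    apply_eq_apply_mod_three_of_add_add_eq htri i (by omega)
  have h012 : x 0 + x 1 + x 2 = 0 := htri 0 (by omega)
  -- `logP` is the sum of the triples starting at `0`, `2`, `N - 2`, plus `x 5`.
  have hP : logP N x = x 2 := by
    have := htri 2 (by omega); have := htri (N - 2) (by omega)
    rw [show N - 2 + 1 = N - 1 by omega, show N - 2 + 2 = N by omega] at this
    rw [logP, hper 5 (by omega)]
    linarith
  have hQ : logQ x = x 0 := by
    rw [logQ, hper 3 (by omega)]
    linarith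
  rw [hP, hper (N - 1) (by omega), hper N le_rfl] at hlast₁
  rw [hP, hQ, hper N le_rfl] at hlast₂
  have hzero : x 0 = 0 ∧ x 1 = 0 ∧ x 2 = 0 := by
    rcases (by omega : N % 3 = 0 ∧ (N - 1) % 3 = 2 ∨ N % 3 = 2 ∧ (N - 1) % 3 = 1)
      with ⟨hr, hr'⟩ | ⟨hr, hr'⟩ <;>
    · rw [hr, hr'] at hlast₁
      rw [hr] at hlast₂
      exact ⟨by linarith, by linarith, by linarith⟩
  intro i hi
  rw [hper i hi]
  rcases (by omega : i % 3 = 0 ∨ i % 3 = 1 ∨ i % 3 = 2) with hr | hr | hr <;> simp [hr, hzero]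

theorem logSys_eqOn_unique {N : ℕ} (hN : 8 ≤ N) (h3 : N % 3 ≠ 1) {x y h : ℕ → ℝ}
    (hx : ∀ i ≤ N, logSys N x i = h i) (hy : ∀ i ≤ N, logSys N y i = h i) :
    ∀ i ≤ N, x i = y i := by
  have := eq_zero_of_logSys_eq_zero hN h3 (x := x - y) fun i hi => by
    rw [map_sub, Pi.sub_apply, hx i hi, hy i hi, sub_self]
  exact fun i hi => sub_eq_zero.1 (this i hi)

theorem exists_logSys_eqOn {N : ℕ} (hN : 8 ≤ N) (h3 : N % 3 ≠ 1) (h : ℕ → ℝ) :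
    ∃ x, ∀ i ≤ N, logSys N x i = h i := by
  let extendByZero := Function.ExtendByZero.linearMap ℝ (Fin.val : Fin (N + 1) → ℕ)
  let F := LinearMap.funLeft ℝ ℝ (Fin.val : Fin (N + 1) → ℕ) ∘ₗ logSys N ∘ₗ extendByZero
  have hF : Function.Injective F := by
    refine (injective_iff_map_eq_zero F).2 fun v hv => ?_
    have := eq_zero_of_logSys_eq_zero hN h3 (x := extendByZero v) fun i hi =>
      congrFun hv ⟨i, by omega⟩
    ext j
    simpa [extendByZero, Fin.val_injective.extend_apply] using this j (by omega)
  obtain ⟨v, hv⟩ := LinearMap.injective_iff_surjective.1 hF fun i => h i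
  exact ⟨extendByZero v, fun i hi => congrFun hv ⟨i, by omega⟩⟩

theorem Pfac_eq_exp_logP {N : ℕ} (hN : 5 ≤ N) {l : ℕ → ℝ} (hl : ∀ i ≤ N, 0 < l i) :
    Pfac N l = exp (logP N fun i => log (l i)) := by
  have h i (hi : i ≤ N) : exp (log (l i)) = l i := exp_log (hl i hi)
  simp only [Pfac, logP, exp_add, two_mul, h 0 (by omega), h 1 (by omega), h 2 (by omega),
    h 3 (by omega), h 4 (by omega), h 5 hN, h (N - 2) (by omega), h (N - 1) (by omega), h N le_rfl]
  ring

theorem Qfac_eq_exp_logQ {l : ℕ → ℝ} (hl : ∀ i ≤ 3, 0 < l i) :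
    Qfac l = exp (logQ fun i => log (l i)) := by
  simp [Qfac, logQ, exp_add, exp_log, hl]

theorem sysHolds_iff_logSys {N : ℕ} (hN : 5 ≤ N) {g l : ℕ → ℝ} (hg : ∀ i ≤ N, 0 < g i)
    (hl : ∀ i ≤ N, 0 < l i) :
    SysHolds N g l ↔ ∀ i ≤ N, logSys N (fun i => log (l i)) i = log (g i) := by
  have hexp {a s : ℝ} {i : ℕ} (hi : i ≤ N) (ha : a = exp s) : a = g i ↔ s = log (g i) := by
    rw [ha]
    exact ⟨fun h => by rw [← h, log_exp], fun h => by rw [h, exp_log (hg i hi)]⟩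
  have hl' i (hi : i ≤ N) : exp (log (l i)) = l i := exp_log (hl i hi)
  rw [logSys_eqOn_iff (by omega), SysHolds, and_iff_right hl]
  refine and_congr (forall₂_congr fun i hi => hexp (by omega) ?_) (and_congr (hexp (by omega) ?_)
    (hexp le_rfl ?_))
  · rw [exp_add, exp_add, hl' i (by omega), hl' (i + 1) (by omega), hl' (i + 2) (by omega)]
  · rw [exp_add, exp_add, hl' (N - 1) (by omega), hl' N le_rfl, Pfac_eq_exp_logP hN hl]
  · rw [exp_add, exp_add, hl' N le_rfl, Pfac_eq_exp_logP hN hl,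
      Qfac_eq_exp_logQ fun i hi => hl i (by omega)]

/-- for `N ≥ 8` with `N mod 3 ≠ 1` and positive `g_0, …, g_N`, there
exist unique positive `λ_0, …, λ_N` solving the multiplicative boundary system. -/
theorem unique_positive_lift (N : ℕ) (hN : 8 ≤ N) (h3 : N % 3 ≠ 1)
    (g : ℕ → ℝ) (hg : ∀ i, i ≤ N → 0 < g i) :
    ∃ l : ℕ → ℝ, SysHolds N g l ∧
      ∀ l' : ℕ → ℝ, SysHolds N g l' → ∀ i, i ≤ N → l' i = l i := by
  obtain ⟨x, hx⟩ := exists_logSys_eqOn hN h3 fun i => log (g i)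
  have hsys : SysHolds N g fun i => exp (x i) := by
    rw [sysHolds_iff_logSys (by omega) hg fun i _ => exp_pos (x i)]
    simpa only [log_exp] using hx
  refine ⟨fun i => exp (x i), hsys, fun l' hl' i hi => ?_⟩
  have hlog := (sysHolds_iff_logSys (by omega) hg hl'.1).1 hl'
  rw [← exp_log (hl'.1 i hi), logSys_eqOn_unique hN h3 hlog hx i hi]
end

section
/- For an integer m ≥ 4 let C_m be the m×m integer matrix with rows and columns indexed by 1, …, m defined as follows: for 1 ≤ i ≤ m−2, row i has entries 1 at columns i, i+1, i+2 and 0 elsewhere; row m−1 has entries 1 at columns 2, m−1, m and 0 elsewhere; row m has entry −1 at column 1, entry 1 at column m, and 0 elsewhere. Then det C_m = 0 if m mod 3 = 1, and det C_m = 3 if m mod 3 ∈ {0, 2}. -/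
/-- The self-replicating `m×m` integer matrix (rows and columns indexed here by
`0, …, m−1`, corresponding to `1, …, m` in the paper):
for `1 ≤ i ≤ m−2` (1-based), row `i` has `1` at columns `i, i+1, i+2` (1-based);
row `m−1` has `1` at columns `2, m−1, m` (1-based); row `m` has `−1` at column `1`
and `1` at column `m` (1-based). -/
def Cmat (m : ℕ) : Matrix (Fin m) (Fin m) ℤ :=
  Matrix.of fun i j =>
    if (i : ℕ) + 2 < m then
      if (j : ℕ) = (i : ℕ) ∨ (j : ℕ) = (i : ℕ) + 1 ∨ (j : ℕ) = (i : ℕ) + 2 then 1 else 0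
    else if (i : ℕ) = m - 2 then
      if (j : ℕ) = 1 ∨ (j : ℕ) = m - 2 ∨ (j : ℕ) = m - 1 then 1 else 0
    else
      if (j : ℕ) = 0 then -1 else if (j : ℕ) = m - 1 then 1 else 0

/-!
Adding `row 2 - row 1` to row `m + 1` and `row 0 - row 1` to row `m + 2` of `C_{m+3}` (rows
indexed from `0`) keeps the determinant and produces a block upper triangular matrix whose
diagonal blocks are the upper unitriangular `3 × 3` matrix of ones and `C_m`. Hence
`det C_{m+3} = det C_m` for `m ≥ 4`, and the three base cases `C_4, C_5, C_6` settle every `m`.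
-/

open Matrix

theorem Matrix.det_updateRow_add_smul_add_smul_self {n R : Type*} [DecidableEq n] [Fintype n]
    [CommRing R] (M : Matrix n n R) {i j k : n} (hij : i ≠ j) (hik : i ≠ k) (a b : R) :
    (M.updateRow i (M i + a • M j + b • M k)).det = M.det := by
  have h := det_updateRow_add_smul_self (M.updateRow i (M i + a • M j)) hik b
  rwa [updateRow_idem, updateRow_self, updateRow_ne hik.symm,
    det_updateRow_add_smul_self _ hij] at h

namespace Cmat

variable {m : ℕ}

theorem apply_of_add_two_lt {i : Fin m} (hi : (i : ℕ) + 2 < m) (j : Fin m) :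
    Cmat m i j = if (j : ℕ) = i ∨ (j : ℕ) = i + 1 ∨ (j : ℕ) = i + 2 then 1 else 0 :=
  if_pos hi

theorem apply_of_eq_sub_two {i : Fin m} (hi : (i : ℕ) = m - 2) (j : Fin m) :
    Cmat m i j = if (j : ℕ) = 1 ∨ (j : ℕ) = m - 2 ∨ (j : ℕ) = m - 1 then 1 else 0 := by
  rw [Cmat, of_apply, if_neg (by omega), if_pos hi]

theorem apply_of_eq_sub_one (hm : 2 ≤ m) {i : Fin m} (hi : (i : ℕ) = m - 1) (j : Fin m) :
    Cmat m i j = if (j : ℕ) = 0 then -1 else if (j : ℕ) = m - 1 then 1 else 0 := by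
  rw [Cmat, of_apply, if_neg (by omega), if_neg (by omega)]

def reduced (m : ℕ) : Matrix (Fin (m + 3)) (Fin (m + 3)) ℤ :=
  let C := Cmat (m + 3)
  let C' := C.updateRow ⟨m + 1, by omega⟩
    (C ⟨m + 1, by omega⟩ + (1 : ℤ) • C ⟨2, by omega⟩ + (-1 : ℤ) • C ⟨1, by omega⟩)
  C'.updateRow ⟨m + 2, by omega⟩
    (C' ⟨m + 2, by omega⟩ + (1 : ℤ) • C' ⟨0, by omega⟩ +
      (-1 : ℤ) • C' ⟨1, by omega⟩)

theorem det_reduced (hm : 2 ≤ m) : (reduced m).det = (Cmat (m + 3)).det := by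
  rw [reduced, det_updateRow_add_smul_add_smul_self, det_updateRow_add_smul_add_smul_self] <;>
    simp only [ne_eq, Fin.ext_iff] <;> omega

theorem reduced_apply_of_le {i : Fin (m + 3)} (hi : (i : ℕ) ≤ m) (j : Fin (m + 3)) :
    reduced m i j = Cmat (m + 3) i j := by
  rw [reduced, updateRow_ne (Fin.ne_of_val_ne (by dsimp only; omega)),
    updateRow_ne (Fin.ne_of_val_ne (by dsimp only; omega))]

theorem reduced_apply_of_eq_add_one (hm : 4 ≤ m) {i : Fin (m + 3)} (hi : (i : ℕ) = m + 1)
    (j : Fin (m + 3)) :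
    reduced m i j = if (j : ℕ) = 4 ∨ (j : ℕ) = m + 1 ∨ (j : ℕ) = m + 2 then 1 else 0 := by
  rw [show i = ⟨m + 1, by omega⟩ from Fin.ext hi, reduced,
    updateRow_ne (Fin.ne_of_val_ne (by dsimp only; omega)), updateRow_self]
  simp only [Pi.add_apply, Pi.smul_apply, smul_eq_mul]
  rw [apply_of_eq_sub_two (by simp) j, apply_of_add_two_lt (by simp; omega) j,
    apply_of_add_two_lt (by simp; omega) j]
  simp only
  split_ifs <;> omega

theorem reduced_apply_of_eq_add_two (hm : 4 ≤ m) {i : Fin (m + 3)} (hi : (i : ℕ) = m + 2)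
    (j : Fin (m + 3)) :
    reduced m i j = if (j : ℕ) = 3 then -1 else if (j : ℕ) = m + 2 then 1 else 0 := by
  rw [show i = ⟨m + 2, by omega⟩ from Fin.ext hi, reduced, updateRow_self]
  simp only [Pi.add_apply, Pi.smul_apply, smul_eq_mul]
  rw [updateRow_ne (Fin.ne_of_val_ne (by dsimp only; omega)),
    updateRow_ne (Fin.ne_of_val_ne (by dsimp only; omega)),
    updateRow_ne (Fin.ne_of_val_ne (by dsimp only; omega)),
    apply_of_eq_sub_one (by omega) (by simp) j, apply_of_add_two_lt (by simp) j,
    apply_of_add_two_lt (by simp; omega) j]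
  simp only
  split_ifs <;> omega

def splitEquiv (m : ℕ) : Fin 3 ⊕ Fin m ≃ Fin (m + 3) :=
  finSumFinEquiv.trans (finCongr (Nat.add_comm 3 m))

@[simp] theorem splitEquiv_inl_val (i : Fin 3) : (splitEquiv m (Sum.inl i) : ℕ) = i := rfl

@[simp] theorem splitEquiv_inr_val (i : Fin m) : (splitEquiv m (Sum.inr i) : ℕ) = 3 + i := rfl

theorem toBlocks₁₁_reduced (hm : 2 ≤ m) :
    ((reduced m).submatrix (splitEquiv m) (splitEquiv m)).toBlocks₁₁ =
      of fun i j => if i ≤ j then 1 else 0 := by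
  ext i j
  simp only [toBlocks₁₁, of_apply, submatrix_apply]
  rw [reduced_apply_of_le (by simp; omega), apply_of_add_two_lt (by simp; omega)]
  simp only [splitEquiv_inl_val, Fin.le_iff_val_le_val]
  split_ifs <;> omega

theorem toBlocks₂₁_reduced (hm : 4 ≤ m) :
    ((reduced m).submatrix (splitEquiv m) (splitEquiv m)).toBlocks₂₁ = 0 := by
  ext i j
  simp only [toBlocks₂₁, of_apply, submatrix_apply, Matrix.zero_apply]
  rcases (by omega : 3 + (i : ℕ) ≤ m ∨ 3 + (i : ℕ) = m + 1 ∨ 3 + (i : ℕ) = m + 2)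
    with hi | hi | hi
  · rw [reduced_apply_of_le (by simpa), apply_of_add_two_lt (by simp; omega)]
    simp only [splitEquiv_inl_val, splitEquiv_inr_val]
    split_ifs <;> omega
  · rw [reduced_apply_of_eq_add_one hm (by simpa)]
    simp only [splitEquiv_inl_val]
    split_ifs <;> omega
  · rw [reduced_apply_of_eq_add_two hm (by simpa)]
    simp only [splitEquiv_inl_val]
    split_ifs <;> omega

theorem toBlocks₂₂_reduced (hm : 4 ≤ m) :
    ((reduced m).submatrix (splitEquiv m) (splitEquiv m)).toBlocks₂₂ = Cmat m := by
  ext i j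
  simp only [toBlocks₂₂, of_apply, submatrix_apply]
  rcases (by omega : (i : ℕ) + 2 < m ∨ (i : ℕ) = m - 2 ∨ (i : ℕ) = m - 1)
    with hi | hi | hi
  · rw [reduced_apply_of_le (by simp; omega), apply_of_add_two_lt (by simp; omega),
      apply_of_add_two_lt hi]
    simp only [splitEquiv_inr_val]
    split_ifs <;> omega
  · rw [reduced_apply_of_eq_add_one hm (by simp; omega), apply_of_eq_sub_two hi]
    simp only [splitEquiv_inr_val]
    split_ifs <;> omega
  · rw [reduced_apply_of_eq_add_two hm (by simp; omega), apply_of_eq_sub_one (by omega) hi]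
    simp only [splitEquiv_inr_val]
    split_ifs <;> omega

theorem det_reduced_eq_det (hm : 4 ≤ m) : (reduced m).det = (Cmat m).det := by
  rw [← det_submatrix_equiv_self (splitEquiv m), ← fromBlocks_toBlocks (submatrix _ _ _),
    toBlocks₂₁_reduced hm, det_fromBlocks_zero₂₁, toBlocks₁₁_reduced (by omega),
    toBlocks₂₂_reduced hm]
  simp [det_fin_three]

theorem det_add_three (hm : 4 ≤ m) : (Cmat (m + 3)).det = (Cmat m).det := by
  rw [← det_reduced (by omega), det_reduced_eq_det hm]

theorem det_four : (Cmat 4).det = 0 := by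
  simp [det_succ_row_zero, Fin.sum_univ_succ, Cmat, Fin.succAbove]

theorem det_five : (Cmat 5).det = 3 := by
  simp [det_succ_row_zero, Fin.sum_univ_succ, Cmat, Fin.succAbove]

theorem det_six : (Cmat 6).det = 3 := by
  simp [det_succ_row_zero, Fin.sum_univ_succ, Cmat, Fin.succAbove]

theorem det_eq_ite (hm : 4 ≤ m) : (Cmat m).det = if m % 3 = 1 then 0 else 3 := by
  induction m using Nat.strong_induction_on with
  | _ m ih =>
    rcases (by omega : m = 4 ∨ m = 5 ∨ m = 6 ∨ 7 ≤ m) with rfl | rfl | rfl | hm7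
    · rw [det_four]; rfl
    · rw [det_five]; rfl
    · rw [det_six]; rfl
    · obtain ⟨k, rfl⟩ : ∃ k, m = k + 3 := ⟨m - 3, by omega⟩
      rw [det_add_three (by omega), ih k (by omega) (by omega), Nat.add_mod_right]

end Cmat

/-- `det C_m = 0` if `m mod 3 = 1` and `det C_m = 3` if
`m mod 3 ∈ {0, 2}`, for `m ≥ 4`. -/
theorem det_Cmat (m : ℕ) (hm : 4 ≤ m) :
    (m % 3 = 1 → (Cmat m).det = 0) ∧
    ((m % 3 = 0 ∨ m % 3 = 2) → (Cmat m).det = 3) := by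
  rw [Cmat.det_eq_ite hm]
  exact ⟨fun h => if_pos h, fun h => if_neg (by omega)⟩
end

section
/- Let W, X, Y, Z ∈ ℝ³ and a, b, c ∈ ℝ satisfy Z = a·Y + b·X + c·W. Then (W×Y)×(X×Z) = det(W,X,Y)·(a·Y + c·W) = det(W,X,Y)·(Z − b·X). -/
open Matrix

/-- `det(u,v,w)`: determinant of the 3×3 matrix with columns `u, v, w`. -/
def det3 (u v w : Fin 3 → ℝ) : ℝ :=
  (Matrix.of fun i j => ![u, v, w] j i).det

/-- if `Z = a·Y + b·X + c·W` then
`(W×Y)×(X×Z) = det(W,X,Y)·(a·Y + c·W) = det(W,X,Y)·(Z − b·X)`. -/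
theorem cross_cross_eq (W X Y Z : Fin 3 → ℝ) (a b c : ℝ)
    (hZ : Z = a • Y + b • X + c • W) :
    crossProduct (crossProduct W Y) (crossProduct X Z)
        = det3 W X Y • (a • Y + c • W) ∧
    crossProduct (crossProduct W Y) (crossProduct X Z)
        = det3 W X Y • (Z - b • X) := by
  subst hZ
  constructor <;>
  · funext i
    fin_cases i <;>
    · simp [crossProduct, det3, Matrix.det_fin_three, Pi.smul_apply]
      ring
end

section
/- Assume the forward spiral condition: V_{N+k} = M·T(V_{k−1}) for all k ≥ 1. For i ∈ ℤ let u_i := (c_i, 0, a_i)ᵀ and let 𝒜_{i+1} be the 3×3 matrix with columns d_{i−1}·u_{i−1}, d_i·K_{i−1}·u_i, and d_{i+1}·K_{i−1}·K_i·u_{i+1}. Then for every integer i ≥ 0, ρ_{N+i+1} = M·ρ_{i−1}·𝒜_{i+1}. -/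
open Matrix

/-- The 3×3 matrix with columns `u, v, w`. -/
def colMat (u v w : Fin 3 → ℝ) : Matrix (Fin 3) (Fin 3) ℝ :=
  Matrix.of fun i j => ![u, v, w] j i

lemma mul_colMat (A : Matrix (Fin 3) (Fin 3) ℝ) (u v w : Fin 3 → ℝ) :
    A * colMat u v w = colMat (A.mulVec u) (A.mulVec v) (A.mulVec w) := by
  ext i j
  fin_cases j <;>
    simp [colMat, Matrix.mul_apply, Matrix.mulVec, dotProduct, Fin.sum_univ_three]

lemma colMat_mulVec (p r q : Fin 3 → ℝ) (C A : ℝ) :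
    (colMat p r q).mulVec ![C, 0, A] = C • p + A • q := by
  ext i
  simp [colMat, Matrix.mulVec, dotProduct, Fin.sum_univ_three]
  ring

lemma cross_key (p q r : Fin 3 → ℝ) (A B C : ℝ) :
    crossProduct (crossProduct p q) (crossProduct r (A • q + B • r + C • p)) =
      (colMat p r q).det • (C • p + A • q) := by
  ext i
  fin_cases i <;>
    simp [cross_apply, colMat, Matrix.det_fin_three, Pi.add_apply, Pi.smul_apply,
      smul_eq_mul] <;> ring

/-- under the forward spiral condition `V_{N+k} = M·T(V_{k−1})` for
all `k ≥ 1`, with `𝒜_{i+1}` the matrix with columns `d_{i−1}·u_{i−1}`,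
`d_i·K_{i−1}·u_i`, `d_{i+1}·K_{i−1}·K_i·u_{i+1}` where `u_i = (c_i, 0, a_i)ᵀ`,
one has `ρ_{N+i+1} = M·ρ_{i−1}·𝒜_{i+1}` for every integer `i ≥ 0`. -/
theorem rho_forward_formula (N : ℕ) (hN : 5 ≤ N)
    (V : ℤ → Fin 3 → ℝ) (a b c : ℤ → ℝ)
    (hrec : ∀ j : ℤ, V (j + 3) = a j • V (j + 2) + b j • V (j + 1) + c j • V j)
    (ρ : ℤ → Matrix (Fin 3) (Fin 3) ℝ)
    (hρ : ∀ j : ℤ, ρ j = colMat (V j) (V (j + 1)) (V (j + 2)))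
    (hρinv : ∀ j : ℤ, IsUnit (ρ j))
    (d : ℤ → ℝ) (hd : ∀ j : ℤ, d j = (ρ j).det)
    (K : ℤ → Matrix (Fin 3) (Fin 3) ℝ)
    (hK : ∀ j : ℤ, K j = !![0, 0, c j; 1, 0, b j; 0, 1, a j])
    (M : Matrix (Fin 3) (Fin 3) ℝ) (hM : M.det = 1)
    (T : ℤ → Fin 3 → ℝ)
    (hT : ∀ j : ℤ, T j =
      crossProduct (crossProduct (V (j - 1)) (V (j + 1))) (crossProduct (V j) (V (j + 2))))
    (hfwd : ∀ k : ℤ, 1 ≤ k → V ((N : ℤ) + k) = M.mulVec (T (k - 1)))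
    (u : ℤ → Fin 3 → ℝ) (hu : ∀ i : ℤ, u i = ![c i, 0, a i])
    (𝒜 : ℤ → Matrix (Fin 3) (Fin 3) ℝ)
    (h𝒜 : ∀ i : ℤ, 𝒜 (i + 1) =
      colMat (d (i - 1) • u (i - 1)) (d i • (K (i - 1)).mulVec (u i))
        (d (i + 1) • ((K (i - 1) * K i).mulVec (u (i + 1))))) :
    ∀ i : ℤ, 0 ≤ i → ρ ((N : ℤ) + i + 1) = M * ρ (i - 1) * 𝒜 (i + 1) := by
  -- the one-step transfer matrix relation ρ_{j+1} = ρ_j K_j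
  have hstep : ∀ j : ℤ, ρ (j + 1) = ρ j * K j := by
    intro j
    have h3 : j + 1 + 2 = j + 3 := by ring
    have h1 : j + 1 + 1 = j + 2 := by ring
    ext i k
    fin_cases k <;>
      simp [hρ, hK, h1, h3, hrec j, colMat, Matrix.mul_apply, Fin.sum_univ_three,
        Pi.add_apply, Pi.smul_apply, smul_eq_mul] <;> ring
  -- the key reformulation of T
  have hTkey : ∀ j : ℤ, T j = d (j - 1) • (ρ (j - 1)).mulVec (u (j - 1)) := by
    intro j
    have e2 : j - 1 + 2 = j + 1 := by ring
    have e1 : j - 1 + 1 = j := by ring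
    have erec : V (j + 2) = a (j - 1) • V (j + 1) + b (j - 1) • V j
        + c (j - 1) • V (j - 1) := by
      have := hrec (j - 1)
      rwa [show j - 1 + 3 = j + 2 by ring, e2, e1] at this
    rw [hT j, erec, cross_key, hd, hρ, e2, e1, hu, colMat_mulVec]
  intro i hi
  have hστ : ρ i = ρ (i - 1) * K (i - 1) := by
    have := hstep (i - 1); rwa [show i - 1 + 1 = i by ring] at this
  have hστ' : ρ (i + 1) = ρ (i - 1) * K (i - 1) * K i := by
    rw [hstep i, hστ]
  -- the three columns of ρ (N+i+1)
  have c0 : V ((N : ℤ) + i + 1) = M.mulVec (T i) := by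
    have := hfwd (i + 1) (by omega)
    rwa [show (N : ℤ) + (i + 1) = N + i + 1 by ring, show i + 1 - 1 = i by ring] at this
  have c1 : V ((N : ℤ) + i + 1 + 1) = M.mulVec (T (i + 1)) := by
    have := hfwd (i + 2) (by omega)
    rwa [show (N : ℤ) + (i + 2) = N + i + 1 + 1 by ring,
      show i + 2 - 1 = i + 1 by ring] at this
  have c2 : V ((N : ℤ) + i + 1 + 2) = M.mulVec (T (i + 2)) := by
    have := hfwd (i + 3) (by omega)
    rwa [show (N : ℤ) + (i + 3) = N + i + 1 + 2 by ring,
      show i + 3 - 1 = i + 2 by ring] at this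
  rw [hρ, c0, c1, c2, h𝒜 i, Matrix.mul_assoc, mul_colMat, mul_colMat,
    hTkey i, hTkey (i + 1), hTkey (i + 2), show i + 1 - 1 = i by ring,
    show i + 2 - 1 = i + 1 by ring, hστ, hστ']
  simp only [Matrix.mulVec_smul, Matrix.mulVec_mulVec, Matrix.mul_assoc]
end

section
/- Let V_0, V_1, V_2 ∈ ℝ³ and let a_0, a_1, a_2, b_0, b_1, b_2, c_0, c_1, c_2 ∈ ℝ. Define V_3 := a_0·V_2 + b_0·V_1 + c_0·V_0, V_4 := a_1·V_3 + b_1·V_2 + c_1·V_1, and V_5 := a_2·V_4 + b_2·V_3 + c_2·V_2. Then det(V_3 − b_0·V_1, V_4 − b_1·V_2, V_5 − b_2·V_3) = c_0·(c_1 + a_1·b_0)·(c_2 + a_2·b_1)·det(V_0, V_1, V_2). -/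
open Matrix

/-- with `V₃ = a₀·V₂ + b₀·V₁ + c₀·V₀`, `V₄ = a₁·V₃ + b₁·V₂ + c₁·V₁`
and `V₅ = a₂·V₄ + b₂·V₃ + c₂·V₂`, one has
`det(V₃ − b₀·V₁, V₄ − b₁·V₂, V₅ − b₂·V₃) = c₀·(c₁+a₁·b₀)·(c₂+a₂·b₁)·det(V₀,V₁,V₂)`. -/
theorem det_of_pentagram_images (V0 V1 V2 : Fin 3 → ℝ)
    (a0 a1 a2 b0 b1 b2 c0 c1 c2 : ℝ)
    (V3 V4 V5 : Fin 3 → ℝ)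
    (hV3 : V3 = a0 • V2 + b0 • V1 + c0 • V0)
    (hV4 : V4 = a1 • V3 + b1 • V2 + c1 • V1)
    (hV5 : V5 = a2 • V4 + b2 • V3 + c2 • V2) :
    det3 (V3 - b0 • V1) (V4 - b1 • V2) (V5 - b2 • V3)
      = c0 * (c1 + a1 * b0) * (c2 + a2 * b1) * det3 V0 V1 V2 := by
  subst hV3 hV4 hV5
  simp only [det3, Matrix.det_fin_three, Matrix.of_apply, Matrix.cons_val', Matrix.cons_val_zero,
    Matrix.cons_val_one, Matrix.head_cons, Matrix.empty_val', Matrix.cons_val_fin_one,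
    Matrix.head_fin_const, Pi.add_apply, Pi.sub_apply, Pi.smul_apply, smul_eq_mul,
    Matrix.cons_val_two, Matrix.tail_cons]
  ring
end
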